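/- arXiv:1310.1591 — 3 statements merged into one kernel-verified Lean document; each statement's English description precedes it below -/
import Mathlib

section
/- If T : c₀ → Y is a bounded linear operator into a Banach space Y such that there exist constants A, B > 0 with A‖x‖ ≤ ‖Tx‖ ≤ B‖x‖ for every x in the positive cone of c₀, then c₀ embeds isomorphically into Y. -/
/-!
The vectors `y m = T eₘ` satisfy `‖y m‖ ≥ A`, and for every functional `ψ` on `Y` the series
`∑ |ψ (y m)|` converges, because `ψ ∘ T` is a functional on `c₀` and `c₀* = ℓ¹`; in particular
`(y m)` is weakly null. A Bessaga–Pełczyński type selection then gives a subsequence `y (n j)`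
and functionals `ψ j` of norm `≤ 1` with `ψ j (y (n j)) ≳ A / 2` and `|ψ j (y (n k))| ≤ ε / 2 ^ k`
for `k ≠ j`. For `f = T ∘ (eₖ ↦ e_{n k})`, testing `f x` against `ψ j` at a coordinate with
`|x j| ≥ ‖x‖ / 2` gives `‖f x‖ ≥ (A / 8) ‖x‖`.
-/

open Filter Topology

noncomputable section

/-- A continuous linear map between Banach lattices is *positive* if it maps the
positive cone into the positive cone. -/
def IsPositiveOp {E F : Type*} [NormedAddCommGroup E] [Lattice E] [HasSolidNorm E] [IsOrderedAddMonoid E] [NormedSpace ℝ E]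
    [NormedAddCommGroup F] [Lattice F] [HasSolidNorm F] [IsOrderedAddMonoid F] [NormedSpace ℝ F] (T : E →L[ℝ] F) : Prop :=
  ∀ x : E, 0 ≤ x → 0 ≤ T x

/-- `T` is a regular operator: a difference of two positive operators. -/
def IsRegularOp {E F : Type*} [NormedAddCommGroup E] [Lattice E] [HasSolidNorm E] [IsOrderedAddMonoid E] [NormedSpace ℝ E]
    [NormedAddCommGroup F] [Lattice F] [HasSolidNorm F] [IsOrderedAddMonoid F] [NormedSpace ℝ F] (T : E →L[ℝ] F) : Prop :=
  ∃ S₁ S₂ : E →L[ℝ] F, IsPositiveOp S₁ ∧ IsPositiveOp S₂ ∧ T = S₁ - S₂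

/-- `T` belongs to `K^r(E,F)`: a difference of two positive compact operators. -/
def IsCompactRegOp {E F : Type*} [NormedAddCommGroup E] [Lattice E] [HasSolidNorm E] [IsOrderedAddMonoid E] [NormedSpace ℝ E]
    [NormedAddCommGroup F] [Lattice F] [HasSolidNorm F] [IsOrderedAddMonoid F] [NormedSpace ℝ F] (T : E →L[ℝ] F) : Prop :=
  ∃ S₁ S₂ : E →L[ℝ] F, IsPositiveOp S₁ ∧ IsPositiveOp S₂ ∧
    IsCompactOperator ⇑S₁ ∧ IsCompactOperator ⇑S₂ ∧ T = S₁ - S₂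

/-- The regular norm `‖T‖_r = inf {‖S‖ : S ≥ ±T}`. -/
def regNorm {E F : Type*} [NormedAddCommGroup E] [Lattice E] [HasSolidNorm E] [IsOrderedAddMonoid E] [NormedSpace ℝ E]
    [NormedAddCommGroup F] [Lattice F] [HasSolidNorm F] [IsOrderedAddMonoid F] [NormedSpace ℝ F] (T : E →L[ℝ] F) : ℝ :=
  sInf {c : ℝ | ∃ S : E →L[ℝ] F, IsPositiveOp (S - T) ∧ IsPositiveOp (S + T) ∧ ‖S‖ = c}

/-- The k-norm `‖T‖_k = inf {‖S‖ : S ∈ K^r(E,F), S ≥ ±T}`. -/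
def kNorm {E F : Type*} [NormedAddCommGroup E] [Lattice E] [HasSolidNorm E] [IsOrderedAddMonoid E] [NormedSpace ℝ E]
    [NormedAddCommGroup F] [Lattice F] [HasSolidNorm F] [IsOrderedAddMonoid F] [NormedSpace ℝ F] (T : E →L[ℝ] F) : ℝ :=
  sInf {c : ℝ | ∃ S : E →L[ℝ] F, IsCompactRegOp S ∧
    IsPositiveOp (S - T) ∧ IsPositiveOp (S + T) ∧ ‖S‖ = c}

/-- The order on operators: `T ≤ S` iff `T x ≤ S x` for all `x ≥ 0`. -/
def OpLE {E F : Type*} [NormedAddCommGroup E] [Lattice E] [HasSolidNorm E] [IsOrderedAddMonoid E] [NormedSpace ℝ E]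
    [NormedAddCommGroup F] [Lattice F] [HasSolidNorm F] [IsOrderedAddMonoid F] [NormedSpace ℝ F] (T S : E →L[ℝ] F) : Prop :=
  ∀ x : E, 0 ≤ x → T x ≤ S x

/-- A Banach lattice is a KB-space if every norm-bounded increasing sequence of
positive elements converges in norm. -/
def IsKBSpace (F : Type*) [NormedAddCommGroup F] [Lattice F] [HasSolidNorm F] [IsOrderedAddMonoid F] : Prop :=
  ∀ f : ℕ → F, Monotone f → (∀ n, 0 ≤ f n) → (∃ C, ∀ n, ‖f n‖ ≤ C) →
    ∃ y, Tendsto f atTop (𝓝 y)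

/-- An atom of a Banach lattice. -/
def IsLatticeAtom {E : Type*} [NormedAddCommGroup E] [Lattice E] [HasSolidNorm E] [IsOrderedAddMonoid E] [NormedSpace ℝ E] (e : E) : Prop :=
  0 < e ∧ ∀ x : E, 0 ≤ x → x ≤ e → ∃ t : ℝ, x = t • e

/-- An atomic Banach lattice: every nonzero positive element dominates an atom. -/
def IsAtomicLattice (E : Type*) [NormedAddCommGroup E] [Lattice E] [HasSolidNorm E] [IsOrderedAddMonoid E] [NormedSpace ℝ E] : Prop :=
  ∀ x : E, 0 < x → ∃ a : E, IsLatticeAtom a ∧ a ≤ x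

/-- The norm is order continuous: every downward directed net decreasing to `0`
converges to `0` in norm. -/
def HasOrderContinuousNorm (E : Type*) [NormedAddCommGroup E] [Lattice E] [HasSolidNorm E] [IsOrderedAddMonoid E] : Prop :=
  ∀ (ι : Type) [Preorder ι] [IsDirected ι (· ≤ ·)] (x : ι → E),
    Antitone x → IsGLB (Set.range x) 0 → Tendsto (fun i => ‖x i‖) atTop (𝓝 0)

open Function
open scoped ZeroAtInfty

theorem Function.Injective.tendsto_extend_zero {α β M : Type*} [Zero M] [TopologicalSpace M]
    {n : α → β} (hn : Injective n) {f : α → M}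
    (hf : Tendsto f cofinite (𝓝 0)) : Tendsto (extend n f 0) cofinite (𝓝 0) := by
  intro U hU
  have hfin : {a | f a ∉ U}.Finite := hf hU
  refine (hfin.image n).subset fun b hb => ?_
  by_cases h : ∃ a, n a = b
  · obtain ⟨a, rfl⟩ := h
    exact ⟨a, by simpa [hn.extend_apply] using hb, rfl⟩
  · exact absurd (mem_of_mem_nhds hU) (by simpa [extend_apply' _ _ _ h] using hb)

namespace ZeroAtInftyContinuousMap

variable {α β : Type*} [TopologicalSpace α]

theorem norm_apply_le {E : Type*} [SeminormedAddCommGroup E] (x : C₀(α, E)) (a : α) :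
    ‖x a‖ ≤ ‖x‖ :=
  x.toBCF.norm_coe_le_norm a

theorem norm_le_of_forall_norm_apply_le {E : Type*} [SeminormedAddCommGroup E] (x : C₀(α, E))
    {C : ℝ} (hC : 0 ≤ C) (h : ∀ a, ‖x a‖ ≤ C) : ‖x‖ ≤ C :=
  (BoundedContinuousFunction.norm_le hC).2 h

theorem exists_half_norm_le_abs_apply [Nonempty α] (x : C₀(α, ℝ)) : ∃ j, ‖x‖ / 2 ≤ |x j| := by
  by_contra! h
  obtain ⟨a⟩ := ‹Nonempty α›
  have := norm_le_of_forall_norm_apply_le x ((abs_nonneg _).trans (h a).le) fun j => (h j).le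
  linarith [abs_nonneg (x a), h a]

variable [DiscreteTopology α]

def ofTendstoCofinite (f : α → ℝ) (hf : Tendsto f cofinite (𝓝 0)) : C₀(α, ℝ) where
  toFun := f
  continuous_toFun := continuous_of_discreteTopology
  zero_at_infty' := by rwa [cocompact_eq_cofinite]

@[simp]
theorem ofTendstoCofinite_apply (f : α → ℝ) (hf : Tendsto f cofinite (𝓝 0)) (a : α) :
    ofTendstoCofinite f hf a = f a :=
  rfl

theorem tendsto_cofinite (x : C₀(α, ℝ)) : Tendsto x cofinite (𝓝 0) := by
  simpa [cocompact_eq_cofinite] using x.zero_at_infty'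

variable [DecidableEq α]

def single (a : α) : C₀(α, ℝ) :=
  ofTendstoCofinite (Pi.single a 1 : α → ℝ) <| tendsto_const_nhds.congr' <|
    (eventually_cofinite_ne a).mono fun _ hb => by simp [hb]

@[simp]
theorem single_apply (a b : α) : single a b = (Pi.single a 1 : α → ℝ) b :=
  rfl

theorem sum_smul_single_apply (s : Finset α) (c : α → ℝ) (b : α) :
    (∑ a ∈ s, c a • single a) b = if b ∈ s then c b else 0 := by
  induction s using Finset.induction_on with
  | empty => simp
  | insert a s ha ih =>
    rw [Finset.sum_insert ha, add_apply, ih]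
    by_cases hb : b = a
    · subst hb; simp [ha]
    · simp [hb, Finset.mem_insert]

theorem hasSum_smul_single (x : C₀(α, ℝ)) : HasSum (fun a => x a • single a) x := by
  rw [HasSum, Metric.tendsto_nhds]
  intro ε hε
  have hfin : {a | ε / 2 ≤ |x a|}.Finite := by
    simpa using eventually_cofinite.1 <|
      (tendsto_cofinite x).abs.eventually (gt_mem_nhds (by simpa using half_pos hε))
  filter_upwards [eventually_ge_atTop hfin.toFinset] with s hs
  rw [dist_comm, dist_eq_norm]
  refine (norm_le_of_forall_norm_apply_le _ (half_pos hε).le fun b => ?_).trans_lt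
    (half_lt_self hε)
  rw [sub_apply, sum_smul_single_apply]
  split_ifs with hb
  · simpa using (half_pos hε).le
  · simpa [Real.norm_eq_abs] using (not_le.1 fun h => hb (hs (hfin.mem_toFinset.2 h))).le

theorem norm_single (a : α) : ‖single a‖ = 1 := by
  refine le_antisymm (norm_le_of_forall_norm_apply_le _ zero_le_one fun b => ?_) ?_
  · by_cases hb : b = a <;> simp [hb]
  · simpa using norm_apply_le (single a) a

theorem single_nonneg (a b : α) : 0 ≤ single a b := by
  by_cases hb : b = a <;> simp [hb]

theorem hasSum_smul_apply_single {F : Type*} [NormedAddCommGroup F] [NormedSpace ℝ F]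
    (φ : C₀(α, ℝ) →L[ℝ] F) (x : C₀(α, ℝ)) : HasSum (fun a => x a • φ (single a)) (φ x) := by
  simpa only [map_smul] using φ.hasSum (hasSum_smul_single x)

theorem summable_abs_apply_single (φ : StrongDual ℝ C₀(α, ℝ)) :
    Summable fun a => |φ (single a)| := by
  refine summable_of_sum_le (c := ‖φ‖) (fun _ => abs_nonneg _) fun s => ?_
  set v := ∑ a ∈ s, (SignType.sign (φ (single a)) : ℝ) • single a
  have hv : ‖v‖ ≤ 1 := norm_le_of_forall_norm_apply_le _ zero_le_one fun b => by
    rw [sum_smul_single_apply]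
    split_ifs
    · rw [Real.norm_eq_abs]; cases SignType.sign (φ (single b)) <;> simp
    · simp
  calc ∑ a ∈ s, |φ (single a)| = φ v := by simp [v, map_sum, sign_mul_self]
    _ ≤ ‖φ‖ * ‖v‖ := (le_abs_self _).trans (φ.le_opNorm v)
    _ ≤ ‖φ‖ := mul_le_of_le_one_right (norm_nonneg φ) hv

theorem le_norm_of_almost_biorthogonal [Nonempty α] {Y : Type*} [NormedAddCommGroup Y]
    [NormedSpace ℝ Y] (f : C₀(α, ℝ) →L[ℝ] Y) (ψ : α → StrongDual ℝ Y)
    (hψ : ∀ j, ‖ψ j‖ ≤ 1) {a : ℝ} (ha : 0 ≤ a) (hdiag : ∀ j, a ≤ ψ j (f (single j)))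
    {c : α → ℝ} {γ : ℝ} (hc : HasSum c γ) (hc₀ : ∀ k, 0 ≤ c k)
    (hoff : ∀ j k, j ≠ k → |ψ j (f (single k))| ≤ c k) (x : C₀(α, ℝ)) :
    (a / 2 - γ) * ‖x‖ ≤ ‖f x‖ := by
  obtain ⟨j, hj⟩ := exists_half_norm_le_abs_apply x
  set g : α → ℝ := fun k => x k * ψ j (f (single k))
  have hg : HasSum g (ψ j (f x)) := by
    simpa [g] using hasSum_smul_apply_single ((ψ j).comp f) x
  have hrest : |ψ j (f x) - g j| ≤ ‖x‖ * γ := by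
    have := (hg.update j 0).norm_le_of_bounded (hc.mul_left ‖x‖) fun k => ?_
    · simpa [neg_add_eq_sub] using this
    · by_cases hk : k = j
      · subst hk; simpa using mul_nonneg (norm_nonneg x) (hc₀ k)
      · simp only [update_of_ne hk, g, Real.norm_eq_abs, abs_mul]
        exact mul_le_mul (by simpa using norm_apply_le x k) (hoff j k (Ne.symm hk))
          (abs_nonneg _) (norm_nonneg x)
  have hfx : |ψ j (f x)| ≤ ‖f x‖ := by
    simpa using (ψ j).le_of_opNorm_le (hψ j) (f x)
  have hgj : ‖x‖ / 2 * a ≤ |g j| := by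
    rw [abs_mul]
    exact mul_le_mul hj ((hdiag j).trans (le_abs_self _)) ha (abs_nonneg _)
  have htri := (abs_sub_abs_le_abs_sub (g j) (ψ j (f x))).trans_eq (abs_sub_comm _ _)
  linarith

variable [TopologicalSpace β] [DiscreteTopology β]

def extendByZero {n : α → β} (hn : Injective n) : C₀(α, ℝ) →L[ℝ] C₀(β, ℝ) :=
  LinearMap.mkContinuous
    { toFun := fun x =>
        ofTendstoCofinite (extend n x 0) (hn.tendsto_extend_zero x.tendsto_cofinite)
      map_add' := fun x y => ext fun b => by
        simpa using congrFun ((ExtendByZero.linearMap ℝ n).map_add x y) b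
      map_smul' := fun c x => ext fun b => by
        simpa using congrFun ((ExtendByZero.linearMap ℝ n).map_smul c x) b }
    1 fun x => by
      rw [one_mul]
      refine norm_le_of_forall_norm_apply_le _ (norm_nonneg x) fun b => ?_
      by_cases h : ∃ a, n a = b
      · obtain ⟨a, rfl⟩ := h
        simpa [hn.extend_apply] using norm_apply_le x a
      · simp [extend_apply' _ _ _ h]

variable [DecidableEq β]

theorem extendByZero_single {n : α → β} (hn : Injective n) (a : α) :
    extendByZero hn (single a) = single (n a) := by
  ext b
  by_cases h : ∃ a', n a' = b
  · obtain ⟨a', rfl⟩ := h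
    simp [extendByZero, hn.extend_apply, Pi.single_apply, hn.eq_iff]
  · have : b ≠ n a := fun hb => h ⟨a, hb.symm⟩
    simp [extendByZero, extend_apply' _ _ _ h, this]

end ZeroAtInftyContinuousMap

section WeaklyNull

variable {Y : Type*} [NormedAddCommGroup Y] [NormedSpace ℝ Y] {y : ℕ → Y}

/-- The functional is `(φ m - φ m') / 2` for norming functionals `φ` of `y`: by compactness in
`ℝ^s` there are `m' ≤ m` with `φ m`, `φ m'` nearly equal on the `y i`, `i ∈ s`, and taking `m`
late makes `φ m' (y m)` small. -/
theorem exists_norming_functional_almost_vanishing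
    (hy : ∀ ψ : StrongDual ℝ Y, Tendsto (fun m => ψ (y m)) atTop (𝓝 0))
    (s : Finset ℕ) {δ : ℝ} (hδ : 0 < δ) (N : ℕ) :
    ∃ m ≥ N, ∃ ψ : StrongDual ℝ Y, ‖ψ‖ ≤ 1 ∧ (‖y m‖ - δ) / 2 ≤ ψ (y m) ∧
      ∀ i ∈ s, |ψ (y i)| ≤ δ := by
  choose φ hφ hφy using fun m => exists_dual_vector'' ℝ (y m)
  set w : ℕ → s → ℝ := fun m i => φ m (y i)
  have hK : IsCompact (Set.univ.pi fun i : s => Metric.closedBall (0 : ℝ) ‖y i‖) :=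
    isCompact_univ_pi fun _ => isCompact_closedBall _ _
  have hw : ∀ m, w m ∈ Set.univ.pi fun i : s => Metric.closedBall (0 : ℝ) ‖y i‖ :=
    fun m i _ => by simpa using (φ m).le_of_opNorm_le (hφ m) (y i)
  obtain ⟨L, -, σ, hσ, hσL⟩ := hK.tendsto_subseq hw
  obtain ⟨i₀, hi₀⟩ := Metric.tendsto_atTop.1 hσL δ hδ
  have hlate : ∀ᶠ i in atTop, i₀ ≤ i ∧ N ≤ σ i ∧ |φ (σ i₀) (y (σ i))| < δ :=
    (eventually_ge_atTop i₀).and <| (hσ.tendsto_atTop.eventually_ge_atTop N).and <|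
      by simpa using (Metric.tendsto_nhds.1 ((hy (φ (σ i₀))).comp hσ.tendsto_atTop) δ hδ)
  obtain ⟨i₁, hi₀₁, hN, hsmall⟩ := hlate.exists
  refine ⟨σ i₁, hN, (2⁻¹ : ℝ) • (φ (σ i₁) - φ (σ i₀)), ?_, ?_, fun i hi => ?_⟩
  · calc ‖(2⁻¹ : ℝ) • (φ (σ i₁) - φ (σ i₀))‖ ≤ 2⁻¹ * (‖φ (σ i₁)‖ + ‖φ (σ i₀)‖) := by
          rw [norm_smul, Real.norm_of_nonneg (by norm_num)]
          gcongr
          exact norm_sub_le _ _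
      _ ≤ 1 := by linarith [hφ (σ i₁), hφ (σ i₀)]
  · simp only [FunLike.coe_smul, FunLike.coe_sub, Pi.smul_apply, Pi.sub_apply, smul_eq_mul, hφy,
      RCLike.ofReal_real_eq_id, id]
    linarith [(abs_lt.1 hsmall).2]
  · have hclose : |w (σ i₁) ⟨i, hi⟩ - w (σ i₀) ⟨i, hi⟩| < 2 * δ :=
      calc |w (σ i₁) ⟨i, hi⟩ - w (σ i₀) ⟨i, hi⟩| ≤ dist (w (σ i₁)) (w (σ i₀)) :=
            dist_le_pi_dist (w (σ i₁)) (w (σ i₀)) ⟨i, hi⟩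
        _ ≤ dist (w (σ i₁)) L + dist (w (σ i₀)) L := dist_triangle_right _ _ _
        _ < δ + δ := add_lt_add (hi₀ i₁ hi₀₁) (hi₀ i₀ le_rfl)
        _ = 2 * δ := by ring
    simp only [FunLike.coe_smul, FunLike.coe_sub, Pi.smul_apply, Pi.sub_apply, smul_eq_mul,
      abs_mul, w] at hclose ⊢
    rw [abs_of_pos (by norm_num : (0 : ℝ) < 2⁻¹)]
    linarith

/-- Each point `(t, m, ψ)` of the recursion carries a label `t`, fixing the tolerance `ε / 2 ^ t`
for the values of the other functionals at `y m`; it must be known before `m` is chosen. -/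
theorem exists_almost_biorthogonal_subseq
    (hy : ∀ ψ : StrongDual ℝ Y, Tendsto (fun m => ψ (y m)) atTop (𝓝 0)) {ε : ℝ} (hε : 0 < ε) :
    ∃ (n : ℕ → ℕ) (ψ : ℕ → StrongDual ℝ Y), StrictMono n ∧ (∀ j, ‖ψ j‖ ≤ 1) ∧
      (∀ j, (‖y (n j)‖ - ε) / 2 ≤ ψ j (y (n j))) ∧
      ∀ j k, j ≠ k → |ψ j (y (n k))| ≤ ε / 2 ^ k := by
  obtain ⟨f, hP, hr⟩ := exists_seq_of_forall_finset_exists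
    (fun p : ℕ × ℕ × StrongDual ℝ Y => ‖p.2.2‖ ≤ 1 ∧ (‖y p.2.1‖ - ε) / 2 ≤ p.2.2 (y p.2.1))
    (fun p q => p.1 < q.1 ∧ p.2.1 < q.2.1 ∧
      |p.2.2 (y q.2.1)| ≤ ε / 2 ^ q.1 ∧ |q.2.2 (y p.2.1)| ≤ ε / 2 ^ p.1)
    fun s _ => by
      set t := s.sup Prod.fst + 1
      have hδ : 0 < ε / 2 ^ t := by positivity
      have hlate : ∀ᶠ m in atTop, ∀ p ∈ s, p.2.1 < m ∧ |p.2.2 (y m)| ≤ ε / 2 ^ t :=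
        (s.eventually_all).2 fun p _ => (eventually_gt_atTop _).and <|
          (Metric.tendsto_nhds.1 (hy p.2.2) _ hδ).mono fun m hm => by simpa using hm.le
      obtain ⟨N, hN⟩ := hlate.exists_forall_of_atTop
      obtain ⟨m, hm, φ, hφ, hφm, hφs⟩ :=
        exists_norming_functional_almost_vanishing hy (s.image fun p => p.2.1) hδ N
      have htol : ∀ u ≤ t, ε / 2 ^ t ≤ ε / 2 ^ u := fun u hu =>
        div_le_div_of_nonneg_left hε.le (by positivity) (pow_le_pow_right₀ one_le_two hu)
      refine ⟨(t, m, φ), ⟨hφ, ?_⟩, fun p hp => ⟨?_, (hN m hm p hp).1, (hN m hm p hp).2, ?_⟩⟩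
      · linarith [htol 0 (Nat.zero_le t), pow_zero (2 : ℝ)]
      · exact Nat.lt_succ_of_le (Finset.le_sup hp)
      · exact (hφs _ (Finset.mem_image_of_mem _ hp)).trans
          (htol _ (Nat.le_succ_of_le (Finset.le_sup hp)))
  have htol : ∀ k, ε / 2 ^ (f k).1 ≤ ε / 2 ^ k := fun k =>
    div_le_div_of_nonneg_left hε.le (by positivity) (pow_le_pow_right₀ one_le_two
      (StrictMono.id_le (fun j k h => (hr j k h).1) k))
  refine ⟨fun j => (f j).2.1, fun j => (f j).2.2, fun j k h => (hr j k h).2.1, fun j => (hP j).1,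
    fun j => (hP j).2, fun j k hjk => ?_⟩
  rcases hjk.lt_or_gt with h | h
  · exact (hr j k h).2.2.1.trans (htol k)
  · exact (hr k j h).2.2.2.trans (htol k)

end WeaklyNull

open ZeroAtInftyContinuousMap

theorem stmt0_general {Y : Type*} [NormedAddCommGroup Y] [NormedSpace ℝ Y]
    (T : ZeroAtInftyContinuousMap ℕ ℝ →L[ℝ] Y) (A B : ℝ) (hA : 0 < A)
    (hbound : ∀ x : ZeroAtInftyContinuousMap ℕ ℝ, (∀ n, 0 ≤ x n) →
      A * ‖x‖ ≤ ‖T x‖ ∧ ‖T x‖ ≤ B * ‖x‖) :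
    ∃ (f : ZeroAtInftyContinuousMap ℕ ℝ →L[ℝ] Y) (c : ℝ), 0 < c ∧
      ∀ x : ZeroAtInftyContinuousMap ℕ ℝ, c * ‖x‖ ≤ ‖f x‖ := by
  set y : ℕ → Y := fun m => T (single m)
  have hyA : ∀ m, A ≤ ‖y m‖ := fun m => by
    simpa [norm_single] using (hbound (single m) (single_nonneg m)).1
  have hy : ∀ ψ : StrongDual ℝ Y, Tendsto (fun m => ψ (y m)) atTop (𝓝 0) := fun ψ =>
    (tendsto_zero_iff_abs_tendsto_zero _).2
      (summable_abs_apply_single (ψ.comp T)).tendsto_atTop_zero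
  -- with `ε = A / 18` the bound below is `((A - ε) / 2 / 2 - 2 * ε) * ‖x‖ = A / 8 * ‖x‖`
  obtain ⟨n, ψ, hn, hψ, hdiag, hoff⟩ :=
    exists_almost_biorthogonal_subseq hy (ε := A / 18) (by positivity)
  set f := T.comp (extendByZero hn.injective)
  have hf : ∀ k, f (single k) = y (n k) := fun k => by simp [f, y, extendByZero_single]
  have hgeom : HasSum (fun k : ℕ => A / 18 / 2 ^ k) (A / 9) := by
    convert hasSum_geometric_two' (A / 9) using 2; ring
  refine ⟨f, A / 8, by positivity, fun x => ?_⟩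
  have hbelow := le_norm_of_almost_biorthogonal f ψ hψ (a := (A - A / 18) / 2) (by linarith)
    (fun j => by rw [hf]; linarith [hdiag j, hyA (n j)]) hgeom (fun k => by positivity)
    (fun j k hjk => by rw [hf]; exact hoff j k hjk) x
  linarith [norm_nonneg x]

/-- If `T : c₀ → Y` is a bounded linear operator into a Banach space `Y`
which is a 0-cone isomorphism (i.e. `A‖x‖ ≤ ‖Tx‖ ≤ B‖x‖` for all `x ≥ 0`), then
`c₀` embeds isomorphically into `Y`. -/
theorem stmt0 {Y : Type*} [NormedAddCommGroup Y] [NormedSpace ℝ Y] [CompleteSpace Y]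
    (T : ZeroAtInftyContinuousMap ℕ ℝ →L[ℝ] Y) (A B : ℝ) (hA : 0 < A) (hB : 0 < B)
    (hbound : ∀ x : ZeroAtInftyContinuousMap ℕ ℝ, (∀ n, 0 ≤ x n) →
      A * ‖x‖ ≤ ‖T x‖ ∧ ‖T x‖ ≤ B * ‖x‖) :
    ∃ (f : ZeroAtInftyContinuousMap ℕ ℝ →L[ℝ] Y) (c : ℝ), 0 < c ∧
      ∀ x : ZeroAtInftyContinuousMap ℕ ℝ, c * ‖x‖ ≤ ‖f x‖ :=
  stmt0_general T A B hA hbound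
end
end

section
/- Let E be a Banach lattice admitting a normalized positive weak*-null sequence (x*ₙ) in E*₊, and F a Banach lattice containing a positive sequence (yₙ) equivalent to the unit vector basis of c₀. Then the map Φ : ℓ∞ → L(E,F) defined by Φ(ξ)(x) = Σₙ ξₙ x*ₙ(x) yₙ is a well-defined isomorphic embedding of ℓ∞ into L(E,F), mapping positive ξ to positive operators. -/
open Filter Topology

noncomputable section

/-! For `c` tending to `0`, the upper `c₀`-estimate `‖∑ᵢ∈ₛ cᵢ yᵢ‖ ≤ b supᵢ∈ₛ |cᵢ|` makes
`∑ cₙ yₙ` Cauchy, and the lower estimate passes to the limit as `a |cₙ| ≤ ‖∑ cₙ yₙ‖`. Weak*-nullness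
of `(x*ₙ)` puts `cₙ = ξₙ x*ₙ(x)` in `c₀` for every bounded `ξ`, so `Φ` is a bilinear map of norm
at most `b`; testing `Φ ξ` on unit vectors `x` with `x*ₙ(x)` close to `‖x*ₙ‖ = 1` gives
`‖Φ ξ‖ ≥ a |ξₙ|`. Positivity holds termwise, since the positive cone is closed. -/

open scoped lp ENNReal NNReal

lemma nonneg_of_two_pow_nsmul_nonneg {α : Type*} [Lattice α] [AddCommGroup α]
    [IsOrderedAddMonoid α] {w : α} : ∀ k : ℕ, 0 ≤ 2 ^ k • w → 0 ≤ w
  | 0, h => by simpa using h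
  | k + 1, h => nonneg_of_two_pow_nsmul_nonneg k
      (nsmul_two_semiclosed (by rwa [← mul_nsmul', ← pow_succ']))

/-- Dyadic approximation: `2 ^ k • (q • v)` is a natural multiple of `v` for
`q = ⌊c 2 ^ k⌋₊ / 2 ^ k`, and these `q` tend to `c`. -/
lemma real_smul_nonneg_of_orderClosedTopology {F : Type*} [Lattice F] [AddCommGroup F]
    [IsOrderedAddMonoid F] [TopologicalSpace F] [OrderClosedTopology F] [Module ℝ F]
    [ContinuousSMul ℝ F] {c : ℝ} (hc : 0 ≤ c) {v : F} (hv : 0 ≤ v) : 0 ≤ c • v := by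
  set q : ℕ → ℝ := fun k => (⌊c * 2 ^ k⌋₊ : ℝ) / 2 ^ k
  have hq : Tendsto q atTop (𝓝 c) :=
    (tendsto_nat_floor_mul_div_atTop hc).comp
      (tendsto_pow_atTop_atTop_of_one_lt (by norm_num : (1 : ℝ) < 2))
  refine ge_of_tendsto' (hq.smul_const v) fun k => nonneg_of_two_pow_nsmul_nonneg k ?_
  have hpow : ((2 ^ k : ℕ) : ℝ) * q k = ⌊c * 2 ^ k⌋₊ := by
    push_cast
    exact mul_div_cancel₀ _ (by positivity)
  rw [← Nat.cast_smul_eq_nsmul ℝ, smul_smul, hpow, Nat.cast_smul_eq_nsmul]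
  exact nsmul_nonneg hv _

section UnitVectorBasisOfCZero

variable {F : Type*} [NormedAddCommGroup F] [NormedSpace ℝ F] {y : ℕ → F} {a b : ℝ}

lemma norm_sum_smul_le_of_forall_norm_le
    (hub : ∀ (s : Finset ℕ) (ξ : ℕ → ℝ),
      ‖∑ i ∈ s, ξ i • y i‖ ≤ b * ((s.sup fun i => ‖ξ i‖₊ : ℝ≥0) : ℝ))
    (hb : 0 ≤ b) {s : Finset ℕ} {c : ℕ → ℝ} {C : ℝ} (hC : 0 ≤ C)
    (hcC : ∀ i ∈ s, ‖c i‖ ≤ C) : ‖∑ i ∈ s, c i • y i‖ ≤ b * C := by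
  have hsup : ((s.sup fun i => ‖c i‖₊ : ℝ≥0) : ℝ) ≤ C :=
    NNReal.coe_le_coe.2 (Finset.sup_le (a := ⟨C, hC⟩) fun i hi => hcC i hi)
  exact (hub s c).trans (mul_le_mul_of_nonneg_left hsup hb)

lemma norm_le_of_hasSum_smul
    (hub : ∀ (s : Finset ℕ) (ξ : ℕ → ℝ),
      ‖∑ i ∈ s, ξ i • y i‖ ≤ b * ((s.sup fun i => ‖ξ i‖₊ : ℝ≥0) : ℝ))
    (hb : 0 ≤ b) {c : ℕ → ℝ} {C : ℝ} (hcC : ∀ n, ‖c n‖ ≤ C) {L : F}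
    (hL : HasSum (fun n => c n • y n) L) : ‖L‖ ≤ b * C :=
  le_of_tendsto' hL.norm fun _ =>
    norm_sum_smul_le_of_forall_norm_le hub hb ((norm_nonneg _).trans (hcC 0)) fun i _ => hcC i

lemma mul_norm_le_of_hasSum_smul
    (hlb : ∀ (s : Finset ℕ) (ξ : ℕ → ℝ),
      a * ((s.sup fun i => ‖ξ i‖₊ : ℝ≥0) : ℝ) ≤ ‖∑ i ∈ s, ξ i • y i‖)
    (ha : 0 ≤ a) {c : ℕ → ℝ} {L : F} (hL : HasSum (fun n => c n • y n) L) (n : ℕ) :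
    a * ‖c n‖ ≤ ‖L‖ := by
  refine ge_of_tendsto hL.norm (eventually_atTop.2 ⟨{n}, fun s hs => (hlb s c).trans' ?_⟩)
  have hn : ‖c n‖₊ ≤ s.sup fun i => ‖c i‖₊ :=
    Finset.le_sup (f := fun i => ‖c i‖₊) (hs (Finset.mem_singleton_self n))
  exact mul_le_mul_of_nonneg_left (NNReal.coe_le_coe.2 hn) ha

lemma summable_smul_of_tendsto_zero [CompleteSpace F]
    (hub : ∀ (s : Finset ℕ) (ξ : ℕ → ℝ),
      ‖∑ i ∈ s, ξ i • y i‖ ≤ b * ((s.sup fun i => ‖ξ i‖₊ : ℝ≥0) : ℝ))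
    (hb : 0 ≤ b) {c : ℕ → ℝ} (hc : Tendsto c atTop (𝓝 0)) :
    Summable fun n => c n • y n := by
  refine summable_iff_vanishing_norm.2 fun ε hε => ?_
  have hδ : 0 < ε / (b + 1) := div_pos hε (by linarith)
  obtain ⟨N, hN⟩ := Metric.tendsto_atTop.1 hc _ hδ
  refine ⟨Finset.range N, fun t ht => ?_⟩
  have htail : ∀ i ∈ t, ‖c i‖ ≤ ε / (b + 1) := fun i hi => by
    have hi : N ≤ i := not_lt.1 fun h => Finset.disjoint_left.1 ht hi (Finset.mem_range.2 h)
    simpa using (hN i hi).le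
  calc ‖∑ i ∈ t, c i • y i‖ ≤ b * (ε / (b + 1)) :=
        norm_sum_smul_le_of_forall_norm_le hub hb hδ.le htail
    _ < ε := by
        rw [mul_div_assoc', div_lt_iff₀ (by linarith)]
        nlinarith

end UnitVectorBasisOfCZero

section SeriesOperator

variable {E F : Type*} [NormedAddCommGroup E] [NormedSpace ℝ E] [NormedAddCommGroup F]
  [NormedSpace ℝ F] {f : ℕ → E →L[ℝ] ℝ} {y : ℕ → F} {a b : ℝ}

/-- `tsum` is additive only on summable families, hence `hsum`. -/
def seriesBilin (f : ℕ → E →L[ℝ] ℝ) (y : ℕ → F)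
    (hsum : ∀ (ξ : ℓ^∞(ℕ, ℝ)) (x : E), Summable fun n => (ξ n * f n x) • y n) :
    ℓ^∞(ℕ, ℝ) →ₗ[ℝ] E →ₗ[ℝ] F :=
  LinearMap.mk₂ ℝ (fun ξ x => ∑' n, (ξ n * f n x) • y n)
    (fun ξ ζ x => by
      simp only [lp.coeFn_add, Pi.add_apply, add_mul, add_smul]
      exact (hsum ξ x).tsum_add (hsum ζ x))
    (fun c ξ x => by
      simp only [lp.coeFn_smul, Pi.smul_apply, smul_eq_mul, mul_assoc, ← smul_smul]
      exact tsum_const_smul'' c)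
    (fun ξ x x' => by
      simp only [map_add, mul_add, add_smul]
      exact (hsum ξ x).tsum_add (hsum ξ x'))
    (fun c ξ x => by
      simp only [map_smul, smul_eq_mul, mul_left_comm, ← smul_smul]
      exact tsum_const_smul'' c)

lemma hasSum_seriesBilin
    (hsum : ∀ (ξ : ℓ^∞(ℕ, ℝ)) (x : E), Summable fun n => (ξ n * f n x) • y n)
    (ξ : ℓ^∞(ℕ, ℝ)) (x : E) :
    HasSum (fun n => (ξ n * f n x) • y n) (seriesBilin f y hsum ξ x) :=
  (hsum ξ x).hasSum

lemma summable_mul_apply_smul [CompleteSpace F]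
    (hub : ∀ (s : Finset ℕ) (ξ : ℕ → ℝ),
      ‖∑ i ∈ s, ξ i • y i‖ ≤ b * ((s.sup fun i => ‖ξ i‖₊ : ℝ≥0) : ℝ))
    (hb : 0 ≤ b) (hf : ∀ x, Tendsto (fun n => f n x) atTop (𝓝 0))
    (ξ : ℓ^∞(ℕ, ℝ)) (x : E) : Summable fun n => (ξ n * f n x) • y n :=
  summable_smul_of_tendsto_zero hub hb <| isBoundedUnder_le_mul_tendsto_zero
    (isBoundedUnder_of ⟨‖ξ‖, fun n => lp.norm_apply_le_norm ENNReal.top_ne_zero ξ n⟩) (hf x)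

lemma norm_seriesBilin_le
    (hub : ∀ (s : Finset ℕ) (ξ : ℕ → ℝ),
      ‖∑ i ∈ s, ξ i • y i‖ ≤ b * ((s.sup fun i => ‖ξ i‖₊ : ℝ≥0) : ℝ))
    (hb : 0 ≤ b) (hf : ∀ n, ‖f n‖ ≤ 1)
    (hsum : ∀ (ξ : ℓ^∞(ℕ, ℝ)) (x : E), Summable fun n => (ξ n * f n x) • y n)
    (ξ : ℓ^∞(ℕ, ℝ)) (x : E) : ‖seriesBilin f y hsum ξ x‖ ≤ b * ‖ξ‖ * ‖x‖ := by
  rw [mul_assoc]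
  refine norm_le_of_hasSum_smul hub hb (fun n => ?_) (hasSum_seriesBilin hsum ξ x)
  rw [norm_mul]
  gcongr
  · exact lp.norm_apply_le_norm ENNReal.top_ne_zero ξ n
  · exact (f n).le_of_opNorm_le (hf n) x |>.trans_eq (one_mul _)

lemma mul_norm_mul_norm_le_opNorm
    (hlb : ∀ (s : Finset ℕ) (ξ : ℕ → ℝ),
      a * ((s.sup fun i => ‖ξ i‖₊ : ℝ≥0) : ℝ) ≤ ‖∑ i ∈ s, ξ i • y i‖)
    (ha : 0 ≤ a) {ξ : ℕ → ℝ} {T : E →L[ℝ] F}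
    (hT : ∀ x, HasSum (fun n => (ξ n * f n x) • y n) (T x)) (n : ℕ) :
    a * ‖ξ n‖ * ‖f n‖ ≤ ‖T‖ := by
  have hbound : ∀ x, ‖((a * ξ n) • f n) x‖ ≤ ‖T‖ * ‖x‖ := fun x => by
    rw [FunLike.coe_smul, Pi.smul_apply, smul_eq_mul, mul_assoc, norm_mul,
      Real.norm_of_nonneg ha]
    exact (mul_norm_le_of_hasSum_smul hlb ha (hT x) n).trans (T.le_opNorm x)
  simpa [norm_smul, norm_mul, Real.norm_of_nonneg ha] using
    ContinuousLinearMap.opNorm_le_bound _ (norm_nonneg T) hbound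

lemma mul_norm_le_opNorm
    (hlb : ∀ (s : Finset ℕ) (ξ : ℕ → ℝ),
      a * ((s.sup fun i => ‖ξ i‖₊ : ℝ≥0) : ℝ) ≤ ‖∑ i ∈ s, ξ i • y i‖)
    (ha : 0 < a) (hf : ∀ n, ‖f n‖ = 1) {ξ : ℓ^∞(ℕ, ℝ)} {T : E →L[ℝ] F}
    (hT : ∀ x, HasSum (fun n => (ξ n * f n x) • y n) (T x)) :
    a * ‖ξ‖ ≤ ‖T‖ := by
  rw [← le_div_iff₀' ha]
  refine lp.norm_le_of_forall_le (by positivity) fun n => (le_div_iff₀' ha).2 ?_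
  simpa [hf n] using mul_norm_mul_norm_le_opNorm hlb ha.le hT n

end SeriesOperator

lemma isPositiveOp_of_hasSum {E F : Type*} [NormedAddCommGroup E] [Lattice E] [HasSolidNorm E]
    [IsOrderedAddMonoid E] [NormedSpace ℝ E] [NormedAddCommGroup F] [Lattice F] [HasSolidNorm F]
    [IsOrderedAddMonoid F] [NormedSpace ℝ F] {f : ℕ → E →L[ℝ] ℝ} {y : ℕ → F} {ξ : ℕ → ℝ}
    {T : E →L[ℝ] F} (hT : ∀ x, HasSum (fun n => (ξ n * f n x) • y n) (T x))
    (hξ : ∀ n, 0 ≤ ξ n) (hf : ∀ n, IsPositiveOp (f n)) (hy : ∀ n, 0 ≤ y n) :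
    IsPositiveOp T := fun x hx =>
  hasSum_le
    (fun n => real_smul_nonneg_of_orderClosedTopology (mul_nonneg (hξ n) (hf n x hx)) (hy n))
    hasSum_zero (hT x)

theorem stmt13_general {E F : Type*}
    [NormedAddCommGroup E] [Lattice E] [HasSolidNorm E] [IsOrderedAddMonoid E] [NormedSpace ℝ E]
    [NormedAddCommGroup F] [Lattice F] [HasSolidNorm F] [IsOrderedAddMonoid F] [NormedSpace ℝ F] [CompleteSpace F]
    (f : ℕ → (E →L[ℝ] ℝ)) (hfnorm : ∀ n, ‖f n‖ = 1)
    (hfpos : ∀ n, IsPositiveOp (f n))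
    (hfwstar : ∀ x : E, Tendsto (fun n => f n x) atTop (𝓝 0))
    (y : ℕ → F) (hypos : ∀ n, 0 ≤ y n)
    (a b : ℝ) (ha : 0 < a) (hb : 0 < b)
    (hc0 : ∀ (s : Finset ℕ) (ξ : ℕ → ℝ),
      a * ((s.sup fun i => ‖ξ i‖₊ : NNReal) : ℝ) ≤ ‖∑ i ∈ s, ξ i • y i‖ ∧
      ‖∑ i ∈ s, ξ i • y i‖ ≤ b * ((s.sup fun i => ‖ξ i‖₊ : NNReal) : ℝ)) :
    ∃ Φ : lp (fun _ : ℕ => ℝ) ⊤ →ₗ[ℝ] (E →L[ℝ] F),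
      (∀ (ξ : lp (fun _ : ℕ => ℝ) ⊤) (x : E),
        HasSum (fun n => (ξ n * f n x) • y n) (Φ ξ x)) ∧
      (∀ ξ : lp (fun _ : ℕ => ℝ) ⊤, (∀ n, 0 ≤ ξ n) → IsPositiveOp (Φ ξ)) ∧
      ∃ A B : ℝ, 0 < A ∧ 0 < B ∧
        ∀ ξ, A * ‖ξ‖ ≤ ‖Φ ξ‖ ∧ ‖Φ ξ‖ ≤ B * ‖ξ‖ := by
  have hlb := fun s ξ => (hc0 s ξ).1
  have hub := fun s ξ => (hc0 s ξ).2
  have hsum := summable_mul_apply_smul hub hb.le hfwstar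
  have hbound := norm_seriesBilin_le hub hb.le (fun n => (hfnorm n).le) hsum
  let Φ := (seriesBilin f y hsum).mkContinuous₂ b hbound
  have hΦ : ∀ ξ x, HasSum (fun n => (ξ n * f n x) • y n) (Φ ξ x) := hasSum_seriesBilin hsum
  refine ⟨Φ.toLinearMap, hΦ, fun ξ hξ => isPositiveOp_of_hasSum (hΦ ξ) hξ hfpos hypos,
    a, b, ha, hb, fun ξ => ⟨mul_norm_le_opNorm hlb ha hfnorm (hΦ ξ),
      Φ.le_of_opNorm_le (LinearMap.mkContinuous₂_norm_le _ hb.le hbound) ξ⟩⟩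

/-- given a normalized positive weak*-null sequence `(x*ₙ)` in `E*₊` and a
positive sequence `(yₙ)` in `F₊` equivalent to the unit vector basis of `c₀`, the map
`Φ(ξ)(x) = Σₙ ξₙ x*ₙ(x) yₙ` is a well-defined isomorphic embedding of `ℓ∞` into `L(E,F)`
mapping positive `ξ` to positive operators. -/
theorem stmt13 {E F : Type*}
    [NormedAddCommGroup E] [Lattice E] [HasSolidNorm E] [IsOrderedAddMonoid E] [NormedSpace ℝ E] [CompleteSpace E]
    [NormedAddCommGroup F] [Lattice F] [HasSolidNorm F] [IsOrderedAddMonoid F] [NormedSpace ℝ F] [CompleteSpace F]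
    (f : ℕ → (E →L[ℝ] ℝ)) (hfnorm : ∀ n, ‖f n‖ = 1)
    (hfpos : ∀ n, IsPositiveOp (f n))
    (hfwstar : ∀ x : E, Tendsto (fun n => f n x) atTop (𝓝 0))
    (y : ℕ → F) (hypos : ∀ n, 0 ≤ y n)
    (a b : ℝ) (ha : 0 < a) (hb : 0 < b)
    (hc0 : ∀ (s : Finset ℕ) (ξ : ℕ → ℝ),
      a * ((s.sup fun i => ‖ξ i‖₊ : NNReal) : ℝ) ≤ ‖∑ i ∈ s, ξ i • y i‖ ∧
      ‖∑ i ∈ s, ξ i • y i‖ ≤ b * ((s.sup fun i => ‖ξ i‖₊ : NNReal) : ℝ)) :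
    ∃ Φ : lp (fun _ : ℕ => ℝ) ⊤ →ₗ[ℝ] (E →L[ℝ] F),
      (∀ (ξ : lp (fun _ : ℕ => ℝ) ⊤) (x : E),
        HasSum (fun n => (ξ n * f n x) • y n) (Φ ξ x)) ∧
      (∀ ξ : lp (fun _ : ℕ => ℝ) ⊤, (∀ n, 0 ≤ ξ n) → IsPositiveOp (Φ ξ)) ∧
      ∃ A B : ℝ, 0 < A ∧ 0 < B ∧
        ∀ ξ, A * ‖ξ‖ ≤ ‖Φ ξ‖ ∧ ‖Φ ξ‖ ≤ B * ‖ξ‖ :=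
  stmt13_general f hfnorm hfpos hfwstar y hypos a b ha hb hc0
end
end

section
/- Let E be a Banach lattice such that E* does not have an order continuous norm, and F a Banach lattice that is not a KB-space... then there exists an increasing sequence (Tₙ) of positive compact operators from E to F whose supremum S in the regular operators exists but is not compact. In particular, if the supremum of every increasing sequence of positive compact operators E → F (when it exists in L^r(E,F)) is compact, and E fails the positive dual Schur property, then F is a KB-space. -/
/-!
Since `F` is not a KB-space, the increments of a bounded increasing non-convergent sequence give
`vₖ ≥ 0` with `‖vₖ‖ ≥ ε` and uniformly bounded sums over finite sets of indices. Subtracting a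
weak* cluster point `G` from norming functionals of the `vₖ` produces, along a subsequence,
functionals `hᵢ` with `hᵢ vᵢ ≈ ‖vᵢ‖` and `∑_{j ≠ i} |hᵢ vⱼ|` small. For the normalized positive
weak*-null `zₖ`, the finite rank operators `Tₙ = ∑_{k < n} zₖ ⊗ vₖ` are positive and increasing,
and converge pointwise, since `zₖ x → 0`, to an operator `S`, which is therefore their supremum.
Picking `xₜ` in the unit ball with `zₜ xₜ > 1/2` and thinning out so that `|zₜ xₛ| ≤ 1/4` for
`s < t`, the functional `hₜ` separates `S xₜ` from `S xₛ` by a fixed distance, so `S` is not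
compact.
-/

open Filter Topology

noncomputable section

theorem inv_two_pow_smul_nonneg {α : Type*} [AddCommGroup α] [Lattice α] [IsOrderedAddMonoid α]
    [Module ℝ α] {x : α} (hx : 0 ≤ x) (k : ℕ) : 0 ≤ ((2 : ℝ) ^ k)⁻¹ • x := by
  induction k with
  | zero => simpa using hx
  | succ k ih =>
    refine nsmul_two_semiclosed ?_
    have h2 : ((2 : ℕ) : ℝ) * ((2 : ℝ) ^ (k + 1))⁻¹ = ((2 : ℝ) ^ k)⁻¹ := by
      rw [pow_succ]; field_simp; norm_num
    rwa [← Nat.cast_smul_eq_nsmul ℝ, smul_smul, h2]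

section NormedLattice

variable {α : Type*} [NormedAddCommGroup α] [Lattice α] [HasSolidNorm α] [IsOrderedAddMonoid α]

theorem norm_le_norm_of_nonneg_of_le {a b : α} (ha : 0 ≤ a) (hab : a ≤ b) : ‖a‖ ≤ ‖b‖ :=
  norm_le_norm_of_abs_le_abs <| by rwa [abs_of_nonneg ha, abs_of_nonneg (ha.trans hab)]

variable [NormedSpace ℝ α]

theorem smul_nonneg_of_hasSolidNorm {c : ℝ} (hc : 0 ≤ c) {x : α} (hx : 0 ≤ x) : 0 ≤ c • x := by
  have hdyadic : ∀ k : ℕ, 0 ≤ ((⌊c * 2 ^ k⌋₊ : ℝ) / 2 ^ k) • x := fun k => by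
    rw [div_eq_mul_inv, mul_smul, Nat.cast_smul_eq_nsmul]
    exact nsmul_nonneg (inv_two_pow_smul_nonneg hx k) _
  have hlim : Tendsto (fun k : ℕ => (⌊c * 2 ^ k⌋₊ : ℝ) / 2 ^ k) atTop (𝓝 c) :=
    (tendsto_nat_floor_mul_div_atTop hc).comp (tendsto_pow_atTop_atTop_of_one_lt one_lt_two)
  exact ge_of_tendsto' (hlim.smul_const x) hdyadic

instance HasSolidNorm.isOrderedModule : IsOrderedModule ℝ α :=
  .of_smul_nonneg fun _ hc _ hx => smul_nonneg_of_hasSolidNorm hc hx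

theorem norm_sum_smul_le {ι : Type*} (s : Finset ι) {a : ι → ℝ} {v : ι → α} {A : ℝ}
    (hA : 0 ≤ A) (ha : ∀ k ∈ s, |a k| ≤ A) (hv : ∀ k ∈ s, 0 ≤ v k) :
    ‖∑ k ∈ s, a k • v k‖ ≤ A * ‖∑ k ∈ s, v k‖ := by
  have hle : ∀ b : ι → ℝ, (∀ k ∈ s, b k ≤ A) → ∑ k ∈ s, b k • v k ≤ A • ∑ k ∈ s, v k :=
    fun b hb => by
      rw [Finset.smul_sum]
      exact Finset.sum_le_sum fun k hk => smul_le_smul_of_nonneg_right (hb k hk) (hv k hk)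
  have habs : |∑ k ∈ s, a k • v k| ≤ |A • ∑ k ∈ s, v k| := by
    rw [abs_of_nonneg (smul_nonneg hA (Finset.sum_nonneg hv))]
    refine abs_le'.2 ⟨hle a fun k hk => (le_abs_self _).trans (ha k hk), ?_⟩
    simpa [neg_smul] using hle (fun k => -a k) fun k hk => (neg_le_abs _).trans (ha k hk)
  simpa [norm_smul, abs_of_nonneg hA] using norm_le_norm_of_abs_le_abs habs

end NormedLattice

theorem exists_seq_rel_succ {α : Type*} [Nonempty α] {r : α → α → Prop} (h : ∀ a, ∃ b, r a b) :
    ∃ φ : ℕ → α, ∀ k, r (φ k) (φ (k + 1)) := by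
  choose g hg using h
  exact ⟨fun k => g^[k] (Classical.arbitrary α), fun k => by
    simpa only [Function.iterate_succ_apply'] using hg _⟩

theorem eventually_abs_le_of_tendsto {a : ℕ → ℝ} (ha : Tendsto a atTop (𝓝 0)) {δ : ℝ}
    (hδ : 0 < δ) : ∀ᶠ n in atTop, |a n| ≤ δ :=
  (ha.eventually (Metric.closedBall_mem_nhds 0 hδ)).mono fun n hn => by simpa using hn

theorem tendsto_zero_of_forall_abs_sum_le {a : ℕ → ℝ} {C : ℝ}
    (h : ∀ s : Finset ℕ, |∑ k ∈ s, a k| ≤ C) : Tendsto a atTop (𝓝 0) := by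
  classical
  have habs : ∀ s : Finset ℕ, ∑ k ∈ s, |a k| ≤ 2 * C := fun s => by
    rw [← Finset.sum_filter_add_sum_filter_not s (fun k => 0 ≤ a k),
      Finset.sum_congr rfl fun k hk => abs_of_nonneg (Finset.mem_filter.1 hk).2,
      Finset.sum_congr rfl fun k hk => abs_of_neg (not_le.1 (Finset.mem_filter.1 hk).2),
      Finset.sum_neg_distrib]
    linarith [le_abs_self (∑ k ∈ s with 0 ≤ a k, a k),
      neg_abs_le (∑ k ∈ s with ¬ 0 ≤ a k, a k),
      h (s.filter fun k => 0 ≤ a k), h (s.filter fun k => ¬ 0 ≤ a k)]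
  exact (summable_of_sum_le (fun k => abs_nonneg (a k)) habs).of_abs.tendsto_atTop_zero

def BoundedFinsetSums {E : Type*} [SeminormedAddCommGroup E] (v : ℕ → E) : Prop :=
  ∃ C, ∀ s : Finset ℕ, ‖∑ k ∈ s, v k‖ ≤ C

namespace BoundedFinsetSums

variable {E : Type*} [NormedAddCommGroup E] {v : ℕ → E}

theorem comp_strictMono (hv : BoundedFinsetSums v) {φ : ℕ → ℕ} (hφ : StrictMono φ) :
    BoundedFinsetSums (v ∘ φ) := by
  obtain ⟨C, hC⟩ := hv
  exact ⟨C, fun s => by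
    simpa only [Finset.sum_map, Function.Embedding.coeFn_mk, Function.comp_apply]
      using hC (s.map ⟨φ, hφ.injective⟩)⟩

theorem tendsto_apply [NormedSpace ℝ E] (hv : BoundedFinsetSums v) (f : StrongDual ℝ E) :
    Tendsto (fun n => f (v n)) atTop (𝓝 0) := by
  obtain ⟨C, hC⟩ := hv
  refine tendsto_zero_of_forall_abs_sum_le (C := ‖f‖ * C) fun s => ?_
  rw [← map_sum, ← Real.norm_eq_abs]
  exact (f.le_opNorm _).trans (mul_le_mul_of_nonneg_left (hC s) (norm_nonneg f))

end BoundedFinsetSums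

theorem exists_boundedFinsetSums_of_not_isKBSpace {F : Type*} [NormedAddCommGroup F] [Lattice F]
    [HasSolidNorm F] [IsOrderedAddMonoid F] [CompleteSpace F] (hF : ¬ IsKBSpace F) :
    ∃ (v : ℕ → F) (ε : ℝ), 0 < ε ∧ (∀ k, 0 ≤ v k) ∧ (∀ k, ε ≤ ‖v k‖) ∧ BoundedFinsetSums v := by
  simp only [IsKBSpace, not_forall, not_exists] at hF
  obtain ⟨f, hmono, hpos, ⟨C, hC⟩, hlim⟩ := hF
  have hnc : ¬ CauchySeq f := fun hf => hlim _ (cauchySeq_tendsto_of_complete hf).choose_spec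
  simp only [Metric.cauchySeq_iff', not_forall, not_exists, not_lt] at hnc
  obtain ⟨ε, hε, hgap⟩ := hnc
  obtain ⟨φ, hφ⟩ := exists_seq_rel_succ fun N => (hgap N).imp fun n hn => hn
  have hinc : ∀ k, 0 ≤ f (φ (k + 1)) - f (φ k) := fun k => sub_nonneg.2 (hmono (hφ k).1)
  refine ⟨fun k => f (φ (k + 1)) - f (φ k), ε, hε, hinc,
    fun k => by simpa only [dist_eq_norm] using (hφ k).2, C, fun s => ?_⟩
  obtain ⟨n, hn⟩ := s.exists_nat_subset_range
  have hsum : ∑ k ∈ s, (f (φ (k + 1)) - f (φ k)) ≤ f (φ n) := calc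
    _ ≤ ∑ k ∈ Finset.range n, (f (φ (k + 1)) - f (φ k)) :=
      Finset.sum_le_sum_of_subset_of_nonneg hn fun k _ _ => hinc k
    _ = f (φ n) - f (φ 0) := Finset.sum_range_sub (f ∘ φ) n
    _ ≤ f (φ n) := sub_le_self _ (hpos _)
  exact (norm_le_norm_of_nonneg_of_le (Finset.sum_nonneg fun k _ => hinc k) hsum).trans (hC _)

section Dual

variable {F : Type*} [NormedAddCommGroup F] [NormedSpace ℝ F]

theorem exists_mapClusterPt_toWeakDual (f : ℕ → StrongDual ℝ F) (hf : ∀ n, ‖f n‖ ≤ 1) :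
    ∃ G : StrongDual ℝ F, ‖G‖ ≤ 1 ∧
      MapClusterPt (StrongDual.toWeakDual G) atTop (StrongDual.toWeakDual ∘ f) := by
  obtain ⟨g, hg, hcl⟩ :=
    (WeakDual.isCompact_closedBall (0 : StrongDual ℝ F) 1).exists_mapClusterPt
      (f := atTop) (u := StrongDual.toWeakDual ∘ f) (by simpa using ⟨0, fun n _ => hf n⟩)
  exact ⟨WeakDual.toStrongDual g, by simpa using hg, hcl⟩

theorem MapClusterPt.frequently_forall_abs_sub_le {G : StrongDual ℝ F} {f : ℕ → StrongDual ℝ F}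
    (hG : MapClusterPt (StrongDual.toWeakDual G) atTop (StrongDual.toWeakDual ∘ f))
    (y : ℕ → F) {δ : ℕ → ℝ} (hδ : ∀ m, 0 < δ m) (N : ℕ) :
    ∃ᶠ n in atTop, ∀ m ≤ N, |f n (y m) - G (y m)| ≤ δ m := by
  have hnhds : ∀ᶠ φ in 𝓝 (StrongDual.toWeakDual G),
      ∀ m ∈ Set.Iic N, |φ (y m) - G (y m)| ≤ δ m :=
    (Filter.eventually_all_finite (Set.finite_Iic N)).2 fun m _ =>
      ((WeakDual.eval_continuous (y m)).tendsto _).eventually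
        (Metric.closedBall_mem_nhds _ (hδ m))
  exact (hG.frequently hnhds).mono fun n hn m hm => hn m hm

variable {v : ℕ → F}

theorem BoundedFinsetSums.exists_gt_forall_abs_le (hv : BoundedFinsetSums v)
    {G : StrongDual ℝ F} {f : ℕ → StrongDual ℝ F}
    (hG : MapClusterPt (StrongDual.toWeakDual G) atTop (StrongDual.toWeakDual ∘ f))
    {δ : ℕ → ℝ} (hδ : ∀ m, 0 < δ m) (N : ℕ) :
    ∃ n, N < n ∧ |G (v n)| ≤ δ N ∧ (∀ m ≤ N, |f m (v n)| ≤ δ N) ∧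
      ∀ m ≤ N, |f n (v m) - G (v m)| ≤ δ m := by
  have hlate : ∀ᶠ n in atTop, N < n ∧ |G (v n)| ≤ δ N ∧ ∀ m ≤ N, |f m (v n)| ≤ δ N :=
    (eventually_gt_atTop N).and <|
      (eventually_abs_le_of_tendsto (hv.tendsto_apply G) (hδ N)).and <|
        (Filter.eventually_all_finite (Set.finite_Iic N)).2 fun m _ =>
          eventually_abs_le_of_tendsto (hv.tendsto_apply (f m)) (hδ N)
  obtain ⟨n, ⟨h₁, h₂, h₃⟩, h₄⟩ :=
    (hlate.and_frequently (hG.frequently_forall_abs_sub_le v hδ N)).exists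
  exact ⟨n, h₁, h₂, h₃, h₄⟩

theorem BoundedFinsetSums.exists_almostBiorthogonal (hv : BoundedFinsetSums v) {η : ℝ}
    (hη : 0 < η) :
    ∃ (φ : ℕ → ℕ) (h : ℕ → StrongDual ℝ F), StrictMono φ ∧ (∀ i, ‖h i‖ ≤ 2) ∧
      (∀ i, ‖v (φ i)‖ - η ≤ h i (v (φ i))) ∧
      ∀ i (s : Finset ℕ), ∑ j ∈ s.erase i, |h i (v (φ j))| ≤ η := by
  choose f hf_norm hf_apply using fun n => exists_dual_vector'' ℝ (v n)
  simp only [RCLike.ofReal_real_eq_id, id] at hf_apply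
  obtain ⟨G, hG_norm, hG⟩ := exists_mapClusterPt_toWeakDual f hf_norm
  set δ : ℕ → ℝ := fun n => η / 4 * (1 / 2) ^ n with hδ_def
  have hδ : ∀ n, 0 < δ n := fun n => by positivity
  have hδ_le : ∀ n, δ n ≤ η / 4 := fun n =>
    mul_le_of_le_one_right (by positivity) (pow_le_one₀ (by norm_num) (by norm_num))
  have hδ_anti : Antitone δ := fun a b hab =>
    mul_le_mul_of_nonneg_left (pow_le_pow_of_le_one (by norm_num) (by norm_num) hab)
      (by positivity)
  obtain ⟨φ, hφ⟩ := exists_seq_rel_succ (hv.exists_gt_forall_abs_le hG hδ)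
  have hφ_mono : StrictMono φ := strictMono_nat_of_lt_succ fun k => (hφ k).1
  have hφ_le : ∀ k, δ (φ k) ≤ δ k := fun k => hδ_anti (hφ_mono.id_le k)
  have hoff : ∀ i j, j ≠ i → |(f (φ (i + 1)) - G) (v (φ (j + 1)))| ≤ 2 * δ j := by
    intro i j hji
    rw [sub_apply]
    rcases hji.lt_or_gt with hji | hij
    · have := (hφ i).2.2.2 (φ (j + 1)) (hφ_mono.monotone hji)
      linarith [hφ_le (j + 1), (hδ_anti (Nat.le_succ j) : δ (j + 1) ≤ δ j), hδ j]
    · have h₁ := (hφ j).2.2.1 (φ (i + 1)) (hφ_mono.monotone hij)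
      have h₂ := (hφ j).2.1
      linarith [abs_sub (f (φ (i + 1)) (v (φ (j + 1)))) (G (v (φ (j + 1)))), hφ_le j]
  -- `φ 0` is not controlled by any step of the recursion, so the subsequence starts at `φ 1`.
  refine ⟨fun i => φ (i + 1), fun i => f (φ (i + 1)) - G,
    fun a b hab => hφ_mono (Nat.succ_lt_succ hab),
    fun i => (norm_sub_le _ _).trans (by linarith [hf_norm (φ (i + 1))]), fun i => ?_,
    fun i s => ?_⟩
  · rw [sub_apply, hf_apply]
    linarith [le_abs_self (G (v (φ (i + 1)))), (hφ i).2.1, hδ_le (φ i)]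
  · have hgeom : ∑ j ∈ s.erase i, (1 / 2 : ℝ) ^ j ≤ 2 :=
      (summable_geometric_two.sum_le_tsum _ fun j _ => by positivity).trans_eq tsum_geometric_two
    calc ∑ j ∈ s.erase i, |(f (φ (i + 1)) - G) (v (φ (j + 1)))|
        ≤ ∑ j ∈ s.erase i, η / 2 * (1 / 2) ^ j :=
          Finset.sum_le_sum fun j hj => (hoff i j (Finset.ne_of_mem_erase hj)).trans_eq
            (by simp only [hδ_def]; ring)
      _ ≤ η := by rw [← Finset.mul_sum]; nlinarith

end Dual

section Predual

variable {E : Type*} [NormedAddCommGroup E] [NormedSpace ℝ E]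

theorem exists_norm_le_one_lt_apply (f : StrongDual ℝ E) {r : ℝ} (hr : r < ‖f‖) :
    ∃ x, ‖x‖ ≤ 1 ∧ r < f x := by
  obtain ⟨x, hx, hrx⟩ := f.exists_lt_apply_of_lt_opNorm hr
  rw [Real.norm_eq_abs] at hrx
  rcases le_or_gt 0 (f x) with h | h
  · exact ⟨x, hx.le, by rwa [abs_of_nonneg h] at hrx⟩
  · exact ⟨-x, by rw [norm_neg]; exact hx.le, by rwa [map_neg, ← abs_of_neg h]⟩

theorem exists_subseq_apply_sub_ge {z : ℕ → StrongDual ℝ E} (hz_norm : ∀ n, ‖z n‖ = 1)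
    (hz_null : ∀ x, Tendsto (fun n => z n x) atTop (𝓝 0)) :
    ∃ (φ : ℕ → ℕ) (x : ℕ → E), StrictMono φ ∧ (∀ t, ‖x t‖ ≤ 1) ∧
      ∀ s t, s < t → 1 / 4 ≤ z (φ t) (x t - x s) := by
  choose y hy_norm hy_apply using fun n =>
    exists_norm_le_one_lt_apply (z n) (r := 1 / 2) (by rw [hz_norm]; norm_num)
  obtain ⟨φ, -, hφ⟩ := exists_seq_of_forall_finset_exists (fun _ => True)
    (fun m n => m < n ∧ |z n (y m)| ≤ 1 / 4) fun s _ =>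
      (((Filter.eventually_all_finset s).2 fun m _ => (eventually_gt_atTop m).and
        (eventually_abs_le_of_tendsto (hz_null (y m)) (by norm_num))).exists).imp
        fun n hn => ⟨trivial, hn⟩
  refine ⟨φ, y ∘ φ, fun a b hab => (hφ a b hab).1, fun t => hy_norm _, fun s t hst => ?_⟩
  simp only [Function.comp_apply, map_sub]
  linarith [hy_apply (φ t), le_abs_self (z (φ t) (y (φ s))), (hφ s t hst).2]

end Predual

theorem not_isCompactOperator_of_separated {𝕜 E F : Type*} [NontriviallyNormedField 𝕜]
    [NormedAddCommGroup E] [NormedSpace 𝕜 E] [NormedAddCommGroup F] [NormedSpace 𝕜 F]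
    (S : E →L[𝕜] F) {x : ℕ → E} (hx : ∀ t, ‖x t‖ ≤ 1) {δ : ℝ} (hδ : 0 < δ)
    (hsep : ∀ s t, s < t → δ ≤ ‖S (x t) - S (x s)‖) : ¬ IsCompactOperator S := by
  intro hS
  obtain ⟨K, hK, hSK⟩ := hS.image_closedBall_subset_compact (f := (S : E →ₗ[𝕜] F)) 1
  obtain ⟨w, -, ψ, hψ, hlim⟩ :=
    hK.tendsto_subseq fun t => hSK ⟨x t, mem_closedBall_zero_iff.2 (hx t), rfl⟩
  obtain ⟨N, hN⟩ := Metric.cauchySeq_iff'.1 hlim.cauchySeq δ hδ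
  have hclose := hN (N + 1) (Nat.le_succ N)
  rw [dist_eq_norm] at hclose
  exact (hsep _ _ (hψ N.lt_succ_self)).not_gt hclose

section Operators

variable {E F : Type*} [NormedAddCommGroup E] [NormedSpace ℝ E]
  [NormedAddCommGroup F] [NormedSpace ℝ F]

def partialSumOp (z : ℕ → StrongDual ℝ E) (v : ℕ → F) (n : ℕ) : E →L[ℝ] F :=
  ∑ k ∈ Finset.range n, (z k).smulRight (v k)

@[simp]
theorem partialSumOp_apply (z : ℕ → StrongDual ℝ E) (v : ℕ → F) (n : ℕ) (x : E) :
    partialSumOp z v n x = ∑ k ∈ Finset.range n, z k x • v k := by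
  simp [partialSumOp]

theorem isCompactOperator_partialSumOp (z : ℕ → StrongDual ℝ E) (v : ℕ → F) (n : ℕ) :
    IsCompactOperator (partialSumOp z v n) := by
  rw [partialSumOp, FunLike.coe_sum]
  refine Finset.sum_induction _ IsCompactOperator (fun _ _ => IsCompactOperator.add)
    isCompactOperator_zero fun k _ => ?_
  have hrank_one :
      (z k).smulRight (v k) = (ContinuousLinearMap.toSpanSingleton ℝ (v k)).comp (z k) := by
    ext x; simp
  rw [hrank_one, ContinuousLinearMap.coe_comp]
  exact (isCompactOperator_of_locallyCompactSpace_dom (z k)).clm_comp _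

theorem abs_apply_sub_le_of_tendsto_partialSumOp {z : ℕ → StrongDual ℝ E}
    (hz_norm : ∀ k, ‖z k‖ ≤ 1) {v : ℕ → F} {S : E →L[ℝ] F}
    (hS : ∀ x, Tendsto (fun n => partialSumOp z v n x) atTop (𝓝 (S x)))
    (g : StrongDual ℝ F) (t : ℕ) {η : ℝ} (hη : ∀ s : Finset ℕ, ∑ j ∈ s.erase t, |g (v j)| ≤ η)
    (y : E) : |g (S y) - z t y * g (v t)| ≤ ‖y‖ * η := by
  have hlim : Tendsto (fun n => |g (partialSumOp z v n y) - z t y * g (v t)|) atTop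
      (𝓝 |g (S y) - z t y * g (v t)|) :=
    (((g.continuous.tendsto _).comp (hS y)).sub_const _).abs
  refine le_of_tendsto hlim ((eventually_gt_atTop t).mono fun n hn => ?_)
  have hz_le : ∀ k, |z k y| ≤ ‖y‖ := fun k => by
    simpa using (z k).le_of_opNorm_le (hz_norm k) y
  rw [partialSumOp_apply, map_sum, ← Finset.add_sum_erase _ _ (Finset.mem_range.2 hn)]
  simp only [map_smul, smul_eq_mul, add_sub_cancel_left]
  calc |∑ k ∈ (Finset.range n).erase t, z k y * g (v k)|
      ≤ ∑ k ∈ (Finset.range n).erase t, ‖y‖ * |g (v k)| :=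
        (Finset.abs_sum_le_sum_abs _ _).trans <| Finset.sum_le_sum fun k _ => by
          rw [abs_mul]; exact mul_le_mul_of_nonneg_right (hz_le k) (abs_nonneg _)
    _ ≤ ‖y‖ * η := by
      rw [← Finset.mul_sum]; exact mul_le_mul_of_nonneg_left (hη _) (norm_nonneg y)

theorem exists_tendsto_partialSumOp [Lattice F] [HasSolidNorm F] [IsOrderedAddMonoid F]
    [CompleteSpace F] {z : ℕ → StrongDual ℝ E} (hz_norm : ∀ k, ‖z k‖ ≤ 1)
    (hz_null : ∀ x, Tendsto (fun k => z k x) atTop (𝓝 0)) {v : ℕ → F}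
    (hv_nonneg : ∀ k, 0 ≤ v k) (hv : BoundedFinsetSums v) :
    ∃ S : E →L[ℝ] F, ∀ x, Tendsto (fun n => partialSumOp z v n x) atTop (𝓝 (S x)) := by
  obtain ⟨C, hC⟩ := hv
  have hC_nonneg : 0 ≤ C := (norm_nonneg _).trans (hC ∅)
  have hsum_le : ∀ x (s : Finset ℕ) {A : ℝ}, 0 ≤ A → (∀ k ∈ s, |z k x| ≤ A) →
      ‖∑ k ∈ s, z k x • v k‖ ≤ A * C := fun x s A hA hzA =>
    (norm_sum_smul_le s hA hzA fun k _ => hv_nonneg k).trans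
      (mul_le_mul_of_nonneg_left (hC s) hA)
  have hcauchy : ∀ x, CauchySeq fun n => partialSumOp z v n x := fun x => by
    refine Metric.cauchySeq_iff'.2 fun ε hε => ?_
    have hA : 0 < ε / (C + 1) := by positivity
    obtain ⟨N, hN⟩ := eventually_atTop.1 (eventually_abs_le_of_tendsto (hz_null x) hA)
    refine ⟨N, fun n hn => ?_⟩
    rw [dist_eq_norm, partialSumOp_apply, partialSumOp_apply, ← Finset.sum_Ico_eq_sub _ hn]
    calc _ ≤ ε / (C + 1) * C := hsum_le x _ hA.le fun k hk => hN k (Finset.mem_Ico.1 hk).1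
      _ < ε := by rw [div_mul_eq_mul_div, div_lt_iff₀ (by positivity)]; nlinarith
  have hlim : Tendsto (fun n x => partialSumOp z v n x) atTop
      (𝓝 fun x => limUnder atTop fun n => partialSumOp z v n x) :=
    tendsto_pi_nhds.2 fun x => (hcauchy x).tendsto_limUnder
  refine ⟨(linearMapOfTendsto _ (fun n => (partialSumOp z v n : E →ₗ[ℝ] F)) hlim).mkContinuous
    C fun x => ?_, fun x => (hcauchy x).tendsto_limUnder⟩
  refine le_of_tendsto (hcauchy x).tendsto_limUnder.norm (Eventually.of_forall fun n => ?_)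
  rw [partialSumOp_apply, mul_comm]
  exact hsum_le x _ (norm_nonneg x) fun k _ => by
    simpa using (z k).le_of_opNorm_le (hz_norm k) x

end Operators

section LatticeOperators

variable {E F : Type*}
  [NormedAddCommGroup E] [Lattice E] [HasSolidNorm E] [IsOrderedAddMonoid E] [NormedSpace ℝ E]
  [NormedAddCommGroup F] [Lattice F] [HasSolidNorm F] [IsOrderedAddMonoid F] [NormedSpace ℝ F]

theorem isPositiveOp_partialSumOp {z : ℕ → StrongDual ℝ E} (hz : ∀ k, IsPositiveOp (z k))
    {v : ℕ → F} (hv : ∀ k, 0 ≤ v k) (n : ℕ) : IsPositiveOp (partialSumOp z v n) :=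
  fun x hx => by
    rw [partialSumOp_apply]
    exact Finset.sum_nonneg fun k _ => smul_nonneg (hz k x hx) (hv k)

theorem opLE_partialSumOp_succ {z : ℕ → StrongDual ℝ E} (hz : ∀ k, IsPositiveOp (z k))
    {v : ℕ → F} (hv : ∀ k, 0 ≤ v k) (n : ℕ) :
    OpLE (partialSumOp z v n) (partialSumOp z v (n + 1)) := fun x hx => by
  simp only [partialSumOp_apply, Finset.sum_range_succ, le_add_iff_nonneg_right]
  exact smul_nonneg (hz n x hx) (hv n)

variable {T : ℕ → E →L[ℝ] F} {S : E →L[ℝ] F}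

theorem opLE_of_tendsto_of_opLE_succ (hT : ∀ n, OpLE (T n) (T (n + 1)))
    (hS : ∀ x, Tendsto (fun n => T n x) atTop (𝓝 (S x))) (n : ℕ) : OpLE (T n) S :=
  fun x hx => (monotone_nat_of_le_succ fun k => hT k x hx).ge_of_tendsto (hS x) n

theorem opLE_of_tendsto_of_forall_opLE (hS : ∀ x, Tendsto (fun n => T n x) atTop (𝓝 (S x)))
    {R : E →L[ℝ] F} (hR : ∀ n, OpLE (T n) R) : OpLE S R :=
  fun x hx => le_of_tendsto' (hS x) fun n => hR n x hx

theorem exists_monotone_isCompactOperator_sup_not_isCompactOperator [CompleteSpace F]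
    {z : ℕ → StrongDual ℝ E} (hz_norm : ∀ n, ‖z n‖ = 1) (hz_pos : ∀ n, IsPositiveOp (z n))
    (hz_null : ∀ x, Tendsto (fun n => z n x) atTop (𝓝 0)) (hF : ¬ IsKBSpace F) :
    ∃ (T : ℕ → (E →L[ℝ] F)) (S : E →L[ℝ] F),
      (∀ n, IsPositiveOp (T n) ∧ IsCompactOperator ⇑(T n)) ∧
      (∀ n, OpLE (T n) (T (n + 1))) ∧
      (∀ n, OpLE (T n) S) ∧
      (∀ R : E →L[ℝ] F, (∀ n, OpLE (T n) R) → OpLE S R) ∧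
      ¬ IsCompactOperator ⇑S := by
  obtain ⟨ψ, x, hψ, hx_norm, hx_sep⟩ := exists_subseq_apply_sub_ge hz_norm hz_null
  obtain ⟨v₀, ε, hε, hv₀_nonneg, hv₀_norm, hv₀⟩ := exists_boundedFinsetSums_of_not_isKBSpace hF
  obtain ⟨φ, h, hφ, hh_norm, hh_diag, hh_off⟩ :=
    hv₀.exists_almostBiorthogonal (η := ε / 32) (by positivity)
  have hz_le : ∀ t, ‖z (ψ t)‖ ≤ 1 := fun t => (hz_norm _).le
  have hz_pos' : ∀ t, IsPositiveOp (z (ψ t)) := fun t => hz_pos _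
  have hv_nonneg : ∀ k, 0 ≤ v₀ (φ k) := fun k => hv₀_nonneg _
  obtain ⟨S, hS⟩ := exists_tendsto_partialSumOp hz_le
    (fun y => (hz_null y).comp hψ.tendsto_atTop) hv_nonneg (hv₀.comp_strictMono hφ)
  have hT := opLE_partialSumOp_succ hz_pos' hv_nonneg
  refine ⟨_, S, fun n => ⟨isPositiveOp_partialSumOp hz_pos' hv_nonneg n,
      isCompactOperator_partialSumOp _ _ n⟩, hT, opLE_of_tendsto_of_opLE_succ hT hS,
    fun R => opLE_of_tendsto_of_forall_opLE hS,
    not_isCompactOperator_of_separated S hx_norm (δ := ε / 32) (by positivity)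
      fun s t hst => ?_⟩
  have hest := abs_apply_sub_le_of_tendsto_partialSumOp hz_le hS (h t) t (hh_off t) (x t - x s)
  have hy : ‖x t - x s‖ ≤ 2 := (norm_sub_le _ _).trans (by linarith [hx_norm t, hx_norm s])
  have hdiag : ε / 2 ≤ h t (v₀ (φ t)) := by linarith [hh_diag t, hv₀_norm (φ t)]
  have hmain : ε / 8 ≤ z (ψ t) (x t - x s) * h t (v₀ (φ t)) := by nlinarith [hx_sep s t hst]
  have herr : ‖x t - x s‖ * (ε / 32) ≤ ε / 16 := by nlinarith
  have hup : h t (S (x t - x s)) ≤ 2 * ‖S (x t) - S (x s)‖ := calc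
    _ ≤ ‖h t‖ * ‖S (x t - x s)‖ := (le_abs_self _).trans ((h t).le_opNorm _)
    _ ≤ 2 * ‖S (x t) - S (x s)‖ := by
      rw [map_sub]; exact mul_le_mul_of_nonneg_right (hh_norm t) (norm_nonneg _)
  linarith [(abs_le.1 hest).1]

end LatticeOperators

theorem stmt14_general {E F : Type*}
    [NormedAddCommGroup E] [Lattice E] [HasSolidNorm E] [IsOrderedAddMonoid E] [NormedSpace ℝ E]
    [NormedAddCommGroup F] [Lattice F] [HasSolidNorm F] [IsOrderedAddMonoid F] [NormedSpace ℝ F] [CompleteSpace F]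
    (hE : ∃ z : ℕ → (E →L[ℝ] ℝ), (∀ n, ‖z n‖ = 1) ∧ (∀ n, IsPositiveOp (z n)) ∧
      (∀ x : E, Tendsto (fun n => z n x) atTop (𝓝 0))) :
    (¬ IsKBSpace F →
      ∃ (T : ℕ → (E →L[ℝ] F)) (S : E →L[ℝ] F),
        (∀ n, IsPositiveOp (T n) ∧ IsCompactOperator ⇑(T n)) ∧
        (∀ n, OpLE (T n) (T (n + 1))) ∧
        (∀ n, OpLE (T n) S) ∧
        (∀ R : E →L[ℝ] F, (∀ n, OpLE (T n) R) → OpLE S R) ∧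
        ¬ IsCompactOperator ⇑S) ∧
    ((∀ (T : ℕ → (E →L[ℝ] F)) (S : E →L[ℝ] F),
        (∀ n, IsPositiveOp (T n) ∧ IsCompactOperator ⇑(T n)) →
        (∀ n, OpLE (T n) (T (n + 1))) →
        (∀ n, OpLE (T n) S) →
        (∀ R : E →L[ℝ] F, (∀ n, OpLE (T n) R) → OpLE S R) →
        IsCompactOperator ⇑S) →
      IsKBSpace F) := by
  obtain ⟨z, hz_norm, hz_pos, hz_null⟩ := hE
  have hbad := fun hF : ¬ IsKBSpace F =>
    exists_monotone_isCompactOperator_sup_not_isCompactOperator hz_norm hz_pos hz_null hF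
  refine ⟨hbad, fun hsup => by_contra fun hF => ?_⟩
  obtain ⟨T, S, hT, hmono, hle, hleast, hS⟩ := hbad hF
  exact hS (hsup T S hT hmono hle hleast)

/-- let `E` fail the positive dual Schur property (there is a normalized
positive weak*-null sequence `(zₙ)` in `E*₊`). If `F` is not a KB-space, then there is
an increasing sequence `(Tₙ)` of positive compact operators whose supremum `S` in the
operator order exists but is not compact. In particular, if the supremum of every
increasing sequence of positive compact operators (when it exists) is compact, then
`F` is a KB-space. -/
theorem stmt14 {E F : Type*}
    [NormedAddCommGroup E] [Lattice E] [HasSolidNorm E] [IsOrderedAddMonoid E] [NormedSpace ℝ E] [CompleteSpace E]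
    [NormedAddCommGroup F] [Lattice F] [HasSolidNorm F] [IsOrderedAddMonoid F] [NormedSpace ℝ F] [CompleteSpace F]
    (hE : ∃ z : ℕ → (E →L[ℝ] ℝ), (∀ n, ‖z n‖ = 1) ∧ (∀ n, IsPositiveOp (z n)) ∧
      (∀ x : E, Tendsto (fun n => z n x) atTop (𝓝 0))) :
    (¬ IsKBSpace F →
      ∃ (T : ℕ → (E →L[ℝ] F)) (S : E →L[ℝ] F),
        (∀ n, IsPositiveOp (T n) ∧ IsCompactOperator ⇑(T n)) ∧
        (∀ n, OpLE (T n) (T (n + 1))) ∧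
        (∀ n, OpLE (T n) S) ∧
        (∀ R : E →L[ℝ] F, (∀ n, OpLE (T n) R) → OpLE S R) ∧
        ¬ IsCompactOperator ⇑S) ∧
    ((∀ (T : ℕ → (E →L[ℝ] F)) (S : E →L[ℝ] F),
        (∀ n, IsPositiveOp (T n) ∧ IsCompactOperator ⇑(T n)) →
        (∀ n, OpLE (T n) (T (n + 1))) →
        (∀ n, OpLE (T n) S) →
        (∀ R : E →L[ℝ] F, (∀ n, OpLE (T n) R) → OpLE S R) →
        IsCompactOperator ⇑S) →
      IsKBSpace F) :=
  stmt14_general hE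
end
end
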